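/- arXiv:math/0108096 — 4 statements merged into one kernel-verified Lean document; each statement's English description precedes it below -/
import Mathlib

section
/- Let Q be a finite abelian group of m×m unitary complex matrices, let φ_1, …, φ_r ∈ ℂ^m, and suppose the compound geometrically uniform vectors {Uφ_k : U ∈ Q, 1 ≤ k ≤ r} span ℂ^m, so that the frame operator S = Σ_{U ∈ Q} Σ_{k=1}^r (Uφ_k)(Uφ_k)* is invertible. Then S commutes with every V ∈ Q, and the dual frame vectors satisfy S⁻¹(Uφ_k) = U(S⁻¹φ_k) for every U ∈ Q and 1 ≤ k ≤ r. That is, the dual frame is compound geometrically uniform with the same generating group Q and generating vectors S⁻¹φ_1, …, S⁻¹φ_r. -/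
open Matrix

private lemma mul_vecMulVec' {n : ℕ} (M : Matrix (Fin n) (Fin n) ℂ) (a b : Fin n → ℂ) :
    M * vecMulVec a b = vecMulVec (M *ᵥ a) b := by
  ext i j
  simp [mul_apply, vecMulVec_apply, mulVec, dotProduct, Finset.sum_mul, mul_assoc]

private lemma vecMulVec_mul' {n : ℕ} (a b : Fin n → ℂ) (M : Matrix (Fin n) (Fin n) ℂ) :
    vecMulVec a b * M = vecMulVec a (b ᵥ* M) := by
  ext i j
  simp [mul_apply, vecMulVec_apply, vecMul, dotProduct, Finset.mul_sum, mul_assoc]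

private lemma dot_sum_mulVec {n : ℕ} {ι : Type*} (s : Finset ι)
    (f : ι → Matrix (Fin n) (Fin n) ℂ) (w v : Fin n → ℂ) :
    w ⬝ᵥ ((∑ i ∈ s, f i) *ᵥ v) = ∑ i ∈ s, w ⬝ᵥ (f i *ᵥ v) := by
  have h1 : (∑ i ∈ s, f i) *ᵥ v = ∑ i ∈ s, f i *ᵥ v :=
    map_sum (Matrix.mulVec.addMonoidHomLeft v) f s
  rw [h1]
  simp only [dotProduct, Finset.sum_apply, Finset.mul_sum]
  exact Finset.sum_comm

private lemma quad_term {n : ℕ} (a v : Fin n → ℂ) :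
    star v ⬝ᵥ (vecMulVec a (star a) *ᵥ v) = (Complex.normSq (star a ⬝ᵥ v) : ℂ) := by
  have h : star v ⬝ᵥ (vecMulVec a (star a) *ᵥ v) = (star v ⬝ᵥ a) * (star a ⬝ᵥ v) := by
    calc star v ⬝ᵥ (vecMulVec a (star a) *ᵥ v)
        = ∑ i, ∑ j, star (v i) * a i * (star (a j) * v j) := by
          simp [dotProduct, mulVec, vecMulVec_apply, Finset.mul_sum, mul_assoc]
      _ = (∑ i, star (v i) * a i) * (∑ j, star (a j) * v j) := by
          rw [Finset.sum_mul_sum]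
  rw [h]
  have h2 : star v ⬝ᵥ a = star (star a ⬝ᵥ v) := by
    rw [star_dotProduct]
  rw [h2, mul_comm]
  simp [Complex.star_def, Complex.mul_conj]

/-- If the compound geometrically uniform vectors `{Uφ_k}` span `ℂ^m`, then
the frame operator `S` is invertible, commutes with every `V ∈ Q`, and the dual frame
vectors satisfy `S⁻¹(Uφ_k) = U(S⁻¹φ_k)`: the dual frame is CGU with the same generating
group and generating vectors `S⁻¹φ_k`. -/
theorem stmt_10 {m r : ℕ} (hm : 0 < m)
    (Q : Subgroup (Matrix.unitaryGroup (Fin m) ℂ)) [Fintype Q]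
    (habelian : ∀ U V : Q, U * V = V * U)
    (φ : Fin r → Fin m → ℂ)
    (hspan : Submodule.span ℂ
      {x : Fin m → ℂ | ∃ (U : Q) (k : Fin r), x = (U : Matrix (Fin m) (Fin m) ℂ) *ᵥ φ k} = ⊤)
    (S : Matrix (Fin m) (Fin m) ℂ)
    (hS : S = ∑ U : Q, ∑ k : Fin r,
      vecMulVec ((U : Matrix (Fin m) (Fin m) ℂ) *ᵥ φ k)
        (star ((U : Matrix (Fin m) (Fin m) ℂ) *ᵥ φ k))) :
    IsUnit S.det ∧
    (∀ V : Q, S * (V : Matrix (Fin m) (Fin m) ℂ) = (V : Matrix (Fin m) (Fin m) ℂ) * S) ∧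
    ∀ (U : Q) (k : Fin r),
      S⁻¹ *ᵥ ((U : Matrix (Fin m) (Fin m) ℂ) *ᵥ φ k)
        = (U : Matrix (Fin m) (Fin m) ℂ) *ᵥ (S⁻¹ *ᵥ φ k) := by
  have hcoe : ∀ U V : Q, ((U * V : Q) : Matrix (Fin m) (Fin m) ℂ)
      = (U : Matrix (Fin m) (Fin m) ℂ) * (V : Matrix (Fin m) (Fin m) ℂ) := fun _ _ => rfl
  have hstar : ∀ V : Q, star (V : Matrix (Fin m) (Fin m) ℂ) * (V : Matrix (Fin m) (Fin m) ℂ) = 1 :=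
    fun V => Matrix.UnitaryGroup.star_mul_self V.1
  -- commutation
  have hcomm : ∀ V : Q, S * (V : Matrix (Fin m) (Fin m) ℂ)
      = (V : Matrix (Fin m) (Fin m) ℂ) * S := by
    intro V
    rw [hS, Finset.sum_mul, Finset.mul_sum]
    refine (Fintype.sum_equiv (Equiv.mulLeft V)
      (fun U => (V : Matrix (Fin m) (Fin m) ℂ) * ∑ k : Fin r,
        vecMulVec ((U : Matrix (Fin m) (Fin m) ℂ) *ᵥ φ k)
          (star ((U : Matrix (Fin m) (Fin m) ℂ) *ᵥ φ k)))
      (fun U => (∑ k : Fin r,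
        vecMulVec ((U : Matrix (Fin m) (Fin m) ℂ) *ᵥ φ k)
          (star ((U : Matrix (Fin m) (Fin m) ℂ) *ᵥ φ k))) * (V : Matrix (Fin m) (Fin m) ℂ))
      ?_).symm
    intro U
    simp only [Equiv.coe_mulLeft, hcoe, Finset.mul_sum, Finset.sum_mul]
    refine Finset.sum_congr rfl fun k _ => ?_
    rw [mul_vecMulVec', vecMulVec_mul', mulVec_mulVec]
    congr 1
    have h1 : star (((V : Matrix (Fin m) (Fin m) ℂ) * (U : Matrix (Fin m) (Fin m) ℂ)) *ᵥ φ k)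
        ᵥ* (V : Matrix (Fin m) (Fin m) ℂ)
        = star ((star (V : Matrix (Fin m) (Fin m) ℂ))
            *ᵥ (((V : Matrix (Fin m) (Fin m) ℂ) * (U : Matrix (Fin m) (Fin m) ℂ)) *ᵥ φ k)) := by
      conv_rhs => rw [star_mulVec, Matrix.star_eq_conjTranspose, conjTranspose_conjTranspose]
    rw [h1, mulVec_mulVec, ← mul_assoc, hstar V, one_mul]
  -- invertibility
  have hdet : S.det ≠ 0 := by
    intro h0
    obtain ⟨v, hv, hSv⟩ := Matrix.exists_mulVec_eq_zero_iff.mpr h0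
    have h1 : star v ⬝ᵥ (S *ᵥ v) = 0 := by rw [hSv]; simp
    rw [hS] at h1
    have h2 : ∑ U : Q, ∑ k : Fin r,
        (Complex.normSq (star ((U : Matrix (Fin m) (Fin m) ℂ) *ᵥ φ k) ⬝ᵥ v) : ℂ) = 0 := by
      rw [← h1, dot_sum_mulVec]
      refine Finset.sum_congr rfl fun U _ => ?_
      rw [dot_sum_mulVec]
      exact Finset.sum_congr rfl fun k _ => (quad_term _ _).symm
    have h3 : ∀ (U : Q) (k : Fin r),
        star ((U : Matrix (Fin m) (Fin m) ℂ) *ᵥ φ k) ⬝ᵥ v = 0 := by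
      have h4 : ∑ U : Q, ∑ k : Fin r,
          Complex.normSq (star ((U : Matrix (Fin m) (Fin m) ℂ) *ᵥ φ k) ⬝ᵥ v) = 0 := by
        have := h2
        push_cast at this
        exact_mod_cast this
      intro U k
      have h5 := (Finset.sum_eq_zero_iff_of_nonneg (fun U _ =>
        Finset.sum_nonneg fun k _ => Complex.normSq_nonneg _)).mp h4 U (Finset.mem_univ U)
      have h6 := (Finset.sum_eq_zero_iff_of_nonneg (fun k _ =>
        Complex.normSq_nonneg _)).mp h5 k (Finset.mem_univ k)
      exact Complex.normSq_eq_zero.mp h6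
    -- linear functional
    let g : (Fin m → ℂ) →ₗ[ℂ] ℂ :=
      { toFun := fun w => w ⬝ᵥ star v
        map_add' := fun x y => add_dotProduct x y (star v)
        map_smul' := fun c x => smul_dotProduct c x (star v) }
    have hker : Submodule.span ℂ
        {x : Fin m → ℂ | ∃ (U : Q) (k : Fin r),
          x = (U : Matrix (Fin m) (Fin m) ℂ) *ᵥ φ k} ≤ LinearMap.ker g := by
      rw [Submodule.span_le]
      rintro x ⟨U, k, rfl⟩
      have := h3 U k
      simp only [SetLike.mem_coe, LinearMap.mem_ker]
      show ((U : Matrix (Fin m) (Fin m) ℂ) *ᵥ φ k) ⬝ᵥ star v = 0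
      have heq : ((U : Matrix (Fin m) (Fin m) ℂ) *ᵥ φ k) ⬝ᵥ star v
          = star (star ((U : Matrix (Fin m) (Fin m) ℂ) *ᵥ φ k) ⬝ᵥ v) := by
        rw [star_dotProduct]; simp [dotProduct_comm]
      rw [heq, this, star_zero]
    rw [hspan, top_le_iff] at hker
    have hgv : g v = 0 := by
      have : v ∈ LinearMap.ker g := by rw [hker]; trivial
      exact this
    have : v ⬝ᵥ star v = 0 := hgv
    have hsum : ∑ i, (Complex.normSq (v i) : ℂ) = 0 := by
      rw [← this]
      simp [dotProduct, Complex.mul_conj]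
    apply hv
    funext i
    have h4 : ∑ i, Complex.normSq (v i) = 0 := by exact_mod_cast hsum
    have := (Finset.sum_eq_zero_iff_of_nonneg (fun i _ =>
      Complex.normSq_nonneg _)).mp h4 i (Finset.mem_univ i)
    exact Complex.normSq_eq_zero.mp this
  have hu : IsUnit S.det := isUnit_iff_ne_zero.mpr hdet
  refine ⟨hu, hcomm, fun U k => ?_⟩
  have hinv : S⁻¹ * (U : Matrix (Fin m) (Fin m) ℂ) = (U : Matrix (Fin m) (Fin m) ℂ) * S⁻¹ := by
    have h := hcomm U
    have h2 := congrArg (fun X => S⁻¹ * X * S⁻¹) h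
    simp only [← mul_assoc] at h2
    rw [Matrix.nonsing_inv_mul S hu, one_mul] at h2
    rw [mul_assoc (S⁻¹ * (U : Matrix (Fin m) (Fin m) ℂ)), Matrix.mul_nonsing_inv S hu,
      mul_one] at h2
    exact h2.symm
  rw [mulVec_mulVec, mulVec_mulVec, hinv]
end

section
/- Let Q be a finite abelian group of m×m unitary complex matrices, let φ_1, …, φ_r ∈ ℂ^m, and suppose the compound geometrically uniform vectors {Uφ_k : U ∈ Q, 1 ≤ k ≤ r} span ℂ^m, so that the frame operator S = Σ_{U ∈ Q} Σ_{k=1}^r (Uφ_k)(Uφ_k)* is Hermitian positive definite. Let T be the unique Hermitian positive definite matrix with T² = S and set μ_k = T⁻¹φ_k. Then the canonical tight frame vectors satisfy T⁻¹(Uφ_k) = Uμ_k for all U ∈ Q and 1 ≤ k ≤ r, and Σ_{U ∈ Q} Σ_{k=1}^r (Uμ_k)(Uμ_k)* = I. That is, the canonical tight frame associated with a CGU frame is CGU with the same generating group Q and generating vectors μ_k = S^{-1/2}φ_k. -/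
open Matrix
open scoped ComplexOrder

/-!
Write `S = ∑_{U ∈ Q} U F U*` with `F = ∑_k φ_k φ_k*`. Reindexing the sum by left multiplication
shows `V S V* = S` for every `V ∈ Q`, so `S` commutes with `Q`. Then `V T V*` is a positive
semidefinite square root of `V S V* = S`, hence equals `T` by uniqueness of square roots; so `T`,
and with it `T⁻¹`, commutes with `Q`. This gives `T⁻¹ U φ_k = U μ_k`, and the frame operator of
the `U μ_k` is `T⁻¹ S T⁻¹ = I`.
-/

namespace Matrix

variable {n R : Type*} [Fintype n] [DecidableEq n] [CommRing R] [StarRing R]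

omit [DecidableEq n] in
theorem vecMulVec_mulVec_star (A : Matrix n n R) (x : n → R) :
    vecMulVec (A *ᵥ x) (star (A *ᵥ x)) = A * vecMulVec x (star x) * Aᴴ := by
  rw [mul_vecMulVec, vecMulVec_mul, star_mulVec]

omit [DecidableEq n] in
theorem sum_vecMulVec_mulVec_star {ι : Type*} [Fintype ι] (A : Matrix n n R) (x : ι → n → R) :
    ∑ i, vecMulVec (A *ᵥ x i) (star (A *ᵥ x i)) =
      A * (∑ i, vecMulVec (x i) (star (x i))) * Aᴴ := by
  simp only [vecMulVec_mulVec_star, Finset.mul_sum, Finset.sum_mul]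

theorem mul_sum_conj_mul_conjTranspose (G : Subgroup (unitaryGroup n R)) [Fintype G]
    (A : Matrix n n R) (U : G) :
    (U : Matrix n n R) * (∑ V : G, (V : Matrix n n R) * A * (V : Matrix n n R)ᴴ) *
        (U : Matrix n n R)ᴴ = ∑ V : G, (V : Matrix n n R) * A * (V : Matrix n n R)ᴴ := by
  rw [Finset.mul_sum, Finset.sum_mul]
  refine Fintype.sum_equiv (Equiv.mulLeft U) _ _ fun V => ?_
  simp [Matrix.mul_assoc]

theorem commute_of_mul_mul_conjTranspose_eq {U A : Matrix n n R} (hU : U ∈ unitaryGroup n R)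
    (h : U * A * Uᴴ = A) : Commute U A := by
  have hUU : Uᴴ * U = 1 := Unitary.star_mul_self_of_mem hU
  calc U * A = U * A * (Uᴴ * U) := by rw [hUU, Matrix.mul_one]
    _ = A * U := by rw [← Matrix.mul_assoc, h]

theorem PosSemidef.commute_of_commute_mul_self {𝕜 : Type*} [RCLike 𝕜] {T U : Matrix n n 𝕜}
    (hT : T.PosSemidef) (hU : U ∈ unitaryGroup n 𝕜) (h : Commute U (T * T)) : Commute U T := by
  have hUU : Uᴴ * U = 1 := Unitary.star_mul_self_of_mem hU
  have hUU' : U * Uᴴ = 1 := Unitary.mul_star_self_of_mem hU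
  -- `U T Uᴴ` and `T` are positive semidefinite square roots of the same matrix.
  have hconj : U * T * Uᴴ = T := by
    open scoped MatrixOrder in
    refine (CFC.sq_eq_sq_iff _ _ (hT.mul_mul_conjTranspose_same U).nonneg hT.nonneg).1 ?_
    calc (U * T * Uᴴ) ^ 2 = U * T * (Uᴴ * U) * T * Uᴴ := by noncomm_ring
      _ = U * (T * T) * Uᴴ := by rw [hUU]; noncomm_ring
      _ = T ^ 2 := by rw [h.eq, Matrix.mul_assoc, hUU', Matrix.mul_one, sq]
  exact commute_of_mul_mul_conjTranspose_eq hU hconj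

omit [StarRing R] in
theorem _root_.Commute.nonsing_inv_right {A B : Matrix n n R} (hB : IsUnit B) (h : Commute A B) :
    Commute A B⁻¹ := by
  simpa using h.units_inv_right (u := hB.unit)

end Matrix

theorem stmt_11_general {m r : ℕ}
    (Q : Subgroup (Matrix.unitaryGroup (Fin m) ℂ)) [Fintype Q]
    (φ : Fin r → Fin m → ℂ)
    (S : Matrix (Fin m) (Fin m) ℂ)
    (hS : S = ∑ U : Q, ∑ k : Fin r,
      vecMulVec ((U : Matrix (Fin m) (Fin m) ℂ) *ᵥ φ k)
        (star ((U : Matrix (Fin m) (Fin m) ℂ) *ᵥ φ k)))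
    (T : Matrix (Fin m) (Fin m) ℂ)
    (hT : T.PosDef)
    (hTsq : T * T = S)
    (μ : Fin r → Fin m → ℂ)
    (hμ : ∀ k : Fin r, μ k = T⁻¹ *ᵥ φ k) :
    (∀ (U : Q) (k : Fin r),
      T⁻¹ *ᵥ ((U : Matrix (Fin m) (Fin m) ℂ) *ᵥ φ k)
        = (U : Matrix (Fin m) (Fin m) ℂ) *ᵥ μ k) ∧
    ∑ U : Q, ∑ k : Fin r,
      vecMulVec ((U : Matrix (Fin m) (Fin m) ℂ) *ᵥ μ k)
        (star ((U : Matrix (Fin m) (Fin m) ℂ) *ᵥ μ k)) = (1 : Matrix (Fin m) (Fin m) ℂ) := by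
  have hS_orbit : S = ∑ U : Q,
      (U : Matrix (Fin m) (Fin m) ℂ) * (∑ k, vecMulVec (φ k) (star (φ k))) *
        (U : Matrix (Fin m) (Fin m) ℂ)ᴴ := by
    simp_rw [hS, sum_vecMulVec_mulVec_star]
  have hUS (U : Q) : Commute (U : Matrix (Fin m) (Fin m) ℂ) S :=
    commute_of_mul_mul_conjTranspose_eq U.1.2 (hS_orbit ▸ mul_sum_conj_mul_conjTranspose Q _ U)
  have hUT (U : Q) : Commute (U : Matrix (Fin m) (Fin m) ℂ) T⁻¹ :=
    (hT.posSemidef.commute_of_commute_mul_self U.1.2 (hTsq ▸ hUS U)).nonsing_inv_right hT.isUnit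
  have hCGU (U : Q) (k : Fin r) :
      T⁻¹ *ᵥ ((U : Matrix (Fin m) (Fin m) ℂ) *ᵥ φ k) = (U : Matrix (Fin m) (Fin m) ℂ) *ᵥ μ k := by
    rw [hμ, mulVec_mulVec, mulVec_mulVec, (hUT U).eq]
  refine ⟨hCGU, ?_⟩
  simp_rw [← hCGU]
  rw [Finset.sum_congr rfl fun U _ => sum_vecMulVec_mulVec_star T⁻¹ _, ← Finset.sum_mul,
    ← Finset.mul_sum, ← hS, ← hTsq, hT.isHermitian.inv.eq]
  have hdet : IsUnit T.det := (isUnit_iff_isUnit_det T).1 hT.isUnit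
  rw [nonsing_inv_mul_cancel_left _ _ hdet, mul_nonsing_inv _ hdet]

/-- Let `{Uφ_k}` be a compound geometrically uniform frame spanning `ℂ^m`
with positive definite frame operator `S`, let `T` be the unique Hermitian positive
definite square root of `S`, and set `μ_k = T⁻¹φ_k`. Then the canonical tight frame
vectors satisfy `T⁻¹(Uφ_k) = Uμ_k` and `∑_{U,k} (Uμ_k)(Uμ_k)* = I`: the canonical tight
frame is CGU with the same generating group and generating vectors `μ_k = S^{-1/2}φ_k`. -/
theorem stmt_11 {m r : ℕ} (hm : 0 < m)
    (Q : Subgroup (Matrix.unitaryGroup (Fin m) ℂ)) [Fintype Q]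
    (habelian : ∀ U V : Q, U * V = V * U)
    (φ : Fin r → Fin m → ℂ)
    (hspan : Submodule.span ℂ
      {x : Fin m → ℂ | ∃ (U : Q) (k : Fin r), x = (U : Matrix (Fin m) (Fin m) ℂ) *ᵥ φ k} = ⊤)
    (S : Matrix (Fin m) (Fin m) ℂ)
    (hS : S = ∑ U : Q, ∑ k : Fin r,
      vecMulVec ((U : Matrix (Fin m) (Fin m) ℂ) *ᵥ φ k)
        (star ((U : Matrix (Fin m) (Fin m) ℂ) *ᵥ φ k)))
    (T : Matrix (Fin m) (Fin m) ℂ)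
    (hT : T.PosDef)
    (hTsq : T * T = S)
    (μ : Fin r → Fin m → ℂ)
    (hμ : ∀ k : Fin r, μ k = T⁻¹ *ᵥ φ k) :
    (∀ (U : Q) (k : Fin r),
      T⁻¹ *ᵥ ((U : Matrix (Fin m) (Fin m) ℂ) *ᵥ φ k)
        = (U : Matrix (Fin m) (Fin m) ℂ) *ᵥ μ k) ∧
    ∑ U : Q, ∑ k : Fin r,
      vecMulVec ((U : Matrix (Fin m) (Fin m) ℂ) *ᵥ μ k)
        (star ((U : Matrix (Fin m) (Fin m) ℂ) *ᵥ μ k)) = (1 : Matrix (Fin m) (Fin m) ℂ) :=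
  stmt_11_general Q φ S hS T hT hTsq μ hμ
end

section
/- Let Q and G be finite abelian groups of m×m unitary complex matrices, let φ ∈ ℂ^m, and suppose Q and G commute up to a phase factor: for every U ∈ Q and V ∈ G there exists a complex number c with |c| = 1 such that U·V = c·(V·U). Let S = Σ_{U ∈ Q} Σ_{V ∈ G} (UVφ)(UVφ)* be the frame operator of the CGU vector set {UVφ : U ∈ Q, V ∈ G}. Then S·(UV) = (UV)·S for all U ∈ Q, V ∈ G; consequently, if the vectors {UVφ} span ℂ^m, then the dual frame vectors are generated by the single vector S⁻¹φ: S⁻¹(UVφ) = UV(S⁻¹φ), and likewise S^{-1/2}(UVφ) = UV(S^{-1/2}φ) for the canonical tight frame. -/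
/-!
Each product `UV` permutes the vectors `U'V'φ` up to unimodular phases: commuting `V` past `U'`
costs a phase, so `(UV)(U'V'φ) = c • (UU')(VV')φ` with `|c| = 1`. Rank-one operators `x x*` do
not see phases, hence `(UV) S (UV)* = S`, i.e. `S` commutes with the unitary `UV`. Then so do
`S⁻¹` and the positive square root of `S`, being functions of `S`.
-/

open Matrix
open scoped Ring

theorem Commute.ringInverse_left {M₀ : Type*} [MonoidWithZero M₀] {a b : M₀}
    (h : Commute a b) : Commute a⁻¹ʳ b := by
  by_cases ha : IsUnit a
  · lift a to M₀ˣ using ha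
    rw [Ring.inverse_unit]
    exact h.units_inv_left
  · rw [Ring.inverse_non_unit _ ha]
    exact Commute.zero_left b

theorem Commute.of_mul_self_left {A : Type*} [PartialOrder A] [Ring A] [StarRing A]
    [TopologicalSpace A] [Algebra ℝ A] [ContinuousFunctionalCalculus ℝ A IsSelfAdjoint]
    [NonnegSpectrumClass ℝ A] [StarOrderedRing A] [IsTopologicalRing A] [T2Space A]
    {t s b : A} (ht : 0 ≤ t) (hts : t * t = s) (h : Commute s b) : Commute t b := by
  rw [← CFC.sqrt_unique hts ht, CFC.sqrt_eq_cfc]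
  exact h.cfc_nnreal _

theorem commute_of_mul_mul_star_eq_self {R : Type*} [Monoid R] [StarMul R] {w s : R}
    (hw : w ∈ unitary R) (h : w * s * star w = s) : Commute s w := by
  calc s * w = w * s * star w * w := by rw [h]
    _ = w * s * (star w * w) := by simp only [mul_assoc]
    _ = w * s := by rw [Unitary.star_mul_self_of_mem hw, mul_one]

theorem mul_mul_mul_comm_of_mul_eq_smul {R A : Type*} [Semigroup A] [SMul R A]
    [IsScalarTower R A A] [SMulCommClass R A A] {a b c d : A} {z : R}
    (h : b * c = z • (c * b)) : a * b * (c * d) = z • (a * c * (b * d)) := by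
  rw [mul_assoc, ← mul_assoc b, h, smul_mul_assoc, mul_smul_comm]
  simp only [mul_assoc]

theorem Commute.mulVec_mulVec_mulVec {n R : Type*} [Fintype n] [NonUnitalSemiring R]
    {A B C : Matrix n n R} (h : Commute A (B * C)) (v : n → R) :
    A *ᵥ (B *ᵥ (C *ᵥ v)) = B *ᵥ (C *ᵥ (A *ᵥ v)) := by
  simp only [mulVec_mulVec]
  rw [h.eq, mul_assoc]

section Frame

variable {𝕜 n ι : Type*} [RCLike 𝕜] [Fintype ι]

def frameOperator (f : ι → n → 𝕜) : Matrix n n 𝕜 :=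
  ∑ i, vecMulVec (f i) (star (f i))

theorem mul_frameOperator_mul_conjTranspose [Fintype n] (W : Matrix n n 𝕜) (f : ι → n → 𝕜) :
    W * frameOperator f * Wᴴ = frameOperator fun i ↦ W *ᵥ f i := by
  simp only [frameOperator, Finset.mul_sum, Finset.sum_mul, mul_vecMulVec, vecMulVec_mul,
    star_mulVec]

theorem frameOperator_smul {c : ι → 𝕜} (hc : ∀ i, ‖c i‖ = 1) (f : ι → n → 𝕜) :
    (frameOperator fun i ↦ c i • f i) = frameOperator f := by
  refine Finset.sum_congr rfl fun i _ ↦ ?_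
  have hci : c i * star (c i) = 1 := by
    rw [RCLike.star_def, RCLike.mul_conj, hc i]; norm_num
  rw [star_smul, smul_vecMulVec, vecMulVec_smul, smul_smul, hci, one_smul]

theorem frameOperator_comp_equiv (f : ι → n → 𝕜) (e : ι ≃ ι) :
    frameOperator (f ∘ e) = frameOperator f :=
  e.sum_comp fun i ↦ vecMulVec (f i) (star (f i))

theorem mul_frameOperator_mul_conjTranspose_eq_self [Fintype n] {W : Matrix n n 𝕜}
    {f : ι → n → 𝕜} (e : ι ≃ ι) {c : ι → 𝕜} (hc : ∀ i, ‖c i‖ = 1)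
    (hf : ∀ i, W *ᵥ f i = c i • f (e i)) :
    W * frameOperator f * Wᴴ = frameOperator f := by
  rw [mul_frameOperator_mul_conjTranspose, funext hf, frameOperator_smul hc]
  exact frameOperator_comp_equiv f e

end Frame

open scoped ComplexOrder MatrixOrder

theorem stmt_12_general {m : ℕ}
    (Q G : Subgroup (Matrix.unitaryGroup (Fin m) ℂ)) [Fintype Q] [Fintype G]
    (hphase : ∀ (U : Q) (V : G), ∃ c : ℂ, ‖c‖ = 1 ∧
      (U : Matrix (Fin m) (Fin m) ℂ) * (V : Matrix (Fin m) (Fin m) ℂ)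
        = c • ((V : Matrix (Fin m) (Fin m) ℂ) * (U : Matrix (Fin m) (Fin m) ℂ)))
    (φ : Fin m → ℂ)
    (S : Matrix (Fin m) (Fin m) ℂ)
    (hS : S = ∑ U : Q, ∑ V : G,
      vecMulVec ((U : Matrix (Fin m) (Fin m) ℂ) *ᵥ ((V : Matrix (Fin m) (Fin m) ℂ) *ᵥ φ))
        (star ((U : Matrix (Fin m) (Fin m) ℂ) *ᵥ ((V : Matrix (Fin m) (Fin m) ℂ) *ᵥ φ)))) :
    (∀ (U : Q) (V : G),
      S * ((U : Matrix (Fin m) (Fin m) ℂ) * (V : Matrix (Fin m) (Fin m) ℂ))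
        = ((U : Matrix (Fin m) (Fin m) ℂ) * (V : Matrix (Fin m) (Fin m) ℂ)) * S) ∧
    (Submodule.span ℂ
        {x : Fin m → ℂ | ∃ (U : Q) (V : G),
          x = (U : Matrix (Fin m) (Fin m) ℂ) *ᵥ ((V : Matrix (Fin m) (Fin m) ℂ) *ᵥ φ)} = ⊤ →
      (∀ (U : Q) (V : G),
        S⁻¹ *ᵥ ((U : Matrix (Fin m) (Fin m) ℂ) *ᵥ ((V : Matrix (Fin m) (Fin m) ℂ) *ᵥ φ))
          = (U : Matrix (Fin m) (Fin m) ℂ) *ᵥ ((V : Matrix (Fin m) (Fin m) ℂ) *ᵥ (S⁻¹ *ᵥ φ))) ∧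
      ∀ T : Matrix (Fin m) (Fin m) ℂ, T.PosDef → T * T = S →
        ∀ (U : Q) (V : G),
          T⁻¹ *ᵥ ((U : Matrix (Fin m) (Fin m) ℂ) *ᵥ ((V : Matrix (Fin m) (Fin m) ℂ) *ᵥ φ))
            = (U : Matrix (Fin m) (Fin m) ℂ) *ᵥ ((V : Matrix (Fin m) (Fin m) ℂ) *ᵥ (T⁻¹ *ᵥ φ))) := by
  set f : Q × G → Fin m → ℂ := fun p ↦ p.1.1.1 *ᵥ (p.2.1.1 *ᵥ φ)
  have hSf : S = frameOperator f := by rw [hS, frameOperator, Fintype.sum_prod_type]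
  choose c hc hUV using hphase
  have hcomm (U : Q) (V : G) : Commute S (U.1.1 * V.1.1) := by
    refine commute_of_mul_mul_star_eq_self (Submonoid.mul_mem _ U.1.2 V.1.2) ?_
    rw [star_eq_conjTranspose, hSf]
    refine mul_frameOperator_mul_conjTranspose_eq_self
      ((Equiv.mulLeft U).prodCongr (Equiv.mulLeft V)) (c := fun p ↦ (c p.1 V)⁻¹)
      (fun p ↦ by simp [hc]) fun p ↦ ?_
    have hVU : V.1.1 * p.1.1.1 = (c p.1 V)⁻¹ • (p.1.1.1 * V.1.1) := by
      rw [hUV, smul_smul, inv_mul_cancel₀ (norm_ne_zero_iff.mp (by simp [hc])), one_smul]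
    simp only [f, mulVec_mulVec, mul_mul_mul_comm_of_mul_eq_smul hVU, smul_mulVec]
    rfl
  refine ⟨fun U V ↦ (hcomm U V).eq, fun _ ↦ ⟨fun U V ↦ ?_, fun T hT hTS U V ↦ ?_⟩⟩
  · rw [nonsing_inv_eq_ringInverse]
    exact (hcomm U V).ringInverse_left.mulVec_mulVec_mulVec φ
  · rw [nonsing_inv_eq_ringInverse]
    exact ((hcomm U V).of_mul_self_left hT.posSemidef.nonneg hTS).ringInverse_left
      |>.mulVec_mulVec_mulVec φ

/-- Let `Q` and `G` be finite abelian groups of `m×m` unitary matrices that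
commute up to a phase factor, let `φ ∈ ℂ^m`, and let `S = ∑_{U ∈ Q, V ∈ G} (UVφ)(UVφ)*`
be the frame operator of the CGU set `{UVφ}`. Then `S` commutes with every product `UV`;
consequently, if the vectors `{UVφ}` span `ℂ^m`, then the dual frame and the canonical
tight frame are each generated by a single vector: `S⁻¹(UVφ) = UV(S⁻¹φ)` and
`S^{-1/2}(UVφ) = UV(S^{-1/2}φ)`. -/
theorem stmt_12 {m : ℕ} (hm : 0 < m)
    (Q G : Subgroup (Matrix.unitaryGroup (Fin m) ℂ)) [Fintype Q] [Fintype G]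
    (habQ : ∀ U V : Q, U * V = V * U)
    (habG : ∀ U V : G, U * V = V * U)
    (hphase : ∀ (U : Q) (V : G), ∃ c : ℂ, ‖c‖ = 1 ∧
      (U : Matrix (Fin m) (Fin m) ℂ) * (V : Matrix (Fin m) (Fin m) ℂ)
        = c • ((V : Matrix (Fin m) (Fin m) ℂ) * (U : Matrix (Fin m) (Fin m) ℂ)))
    (φ : Fin m → ℂ)
    (S : Matrix (Fin m) (Fin m) ℂ)
    (hS : S = ∑ U : Q, ∑ V : G,
      vecMulVec ((U : Matrix (Fin m) (Fin m) ℂ) *ᵥ ((V : Matrix (Fin m) (Fin m) ℂ) *ᵥ φ))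
        (star ((U : Matrix (Fin m) (Fin m) ℂ) *ᵥ ((V : Matrix (Fin m) (Fin m) ℂ) *ᵥ φ)))) :
    (∀ (U : Q) (V : G),
      S * ((U : Matrix (Fin m) (Fin m) ℂ) * (V : Matrix (Fin m) (Fin m) ℂ))
        = ((U : Matrix (Fin m) (Fin m) ℂ) * (V : Matrix (Fin m) (Fin m) ℂ)) * S) ∧
    (Submodule.span ℂ
        {x : Fin m → ℂ | ∃ (U : Q) (V : G),
          x = (U : Matrix (Fin m) (Fin m) ℂ) *ᵥ ((V : Matrix (Fin m) (Fin m) ℂ) *ᵥ φ)} = ⊤ →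
      (∀ (U : Q) (V : G),
        S⁻¹ *ᵥ ((U : Matrix (Fin m) (Fin m) ℂ) *ᵥ ((V : Matrix (Fin m) (Fin m) ℂ) *ᵥ φ))
          = (U : Matrix (Fin m) (Fin m) ℂ) *ᵥ ((V : Matrix (Fin m) (Fin m) ℂ) *ᵥ (S⁻¹ *ᵥ φ))) ∧
      ∀ T : Matrix (Fin m) (Fin m) ℂ, T.PosDef → T * T = S →
        ∀ (U : Q) (V : G),
          T⁻¹ *ᵥ ((U : Matrix (Fin m) (Fin m) ℂ) *ᵥ ((V : Matrix (Fin m) (Fin m) ℂ) *ᵥ φ))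
            = (U : Matrix (Fin m) (Fin m) ℂ) *ᵥ ((V : Matrix (Fin m) (Fin m) ℂ) *ᵥ (T⁻¹ *ᵥ φ))) :=
  stmt_12_general Q G hphase φ S hS
end

section
/- Let F be an m×n complex matrix, and let R be an n×n Hermitian positive semidefinite matrix of rank m with F·R·F* positive definite (invertible). Define β̂ = Tr((F·R·F*)^{1/2}) / Tr(R), which is a positive real number, and set Φ̂ = β̂·(F·R·F*)^{-1/2}·F·R. Then Φ̂*·Φ̂ = β̂²·R, and for every real β > 0 and every m×n complex matrix Φ satisfying Φ*·Φ = β²·R, the Frobenius-norm error satisfies ‖Φ̂ − F‖_F ≤ ‖Φ − F‖_F. That is, Φ̂ is the constrained least-squares matrix closest to F whose Gram matrix is a positive multiple of R, with optimal scaling β̂. -/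
/-!
Since `R` is positive semidefinite of rank `m`, it factors as `R = C* C` with `C` of size `m × n`.
Then `W = T₁⁻¹ F C*` satisfies `W W* = T₁⁻¹ (F R F*) T₁⁻¹ = 1`, so it is unitary, and
`Φ̂ = β̂ W C` has Gram matrix `β̂² C* W* W C = β̂² R`.

For `Φ* Φ = β² R` the error is `‖Φ - F‖² = β² tr R - 2 Re tr (Φ F*) + ‖F‖²`. Since
`(Φ F*)* (Φ F*) = (β T₁)²`, we have `Φ F* = β U T₁` with `U` unitary, and
`Re tr (U T₁) ≤ tr T₁` because `tr ((1 - U) T₁ (1 - U)*) = 2 tr T₁ - 2 Re tr (U T₁) ≥ 0`.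
Hence the error is at least `β² tr R - 2 β tr T₁ + ‖F‖²`, with equality for `Φ̂` (where
`Φ̂ F* = β̂ T₁`), and this quadratic in `β` is minimal at `β̂ = tr T₁ / tr R`.
-/

open Matrix
open scoped ComplexOrder

namespace Matrix

theorem conjTranspose_submatrix_mul_submatrix_of_eq_zero {α l m p : Type*}
    [NonUnitalNonAssocSemiring α] [Star α] [Fintype l] [Fintype m] {A : Matrix l p α} {g : m → l}
    (hg : Function.Injective g) (hA : ∀ i ∉ Set.range g, A i = 0) :
    (A.submatrix g id)ᴴ * A.submatrix g id = Aᴴ * A := by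
  ext j k
  simp only [mul_apply, conjTranspose_apply, submatrix_apply, id]
  exact Fintype.sum_of_injective g hg _ _ (fun i hi => by simp [hA i hi]) (fun _ => rfl)

variable {𝕜 m n : Type*} [RCLike 𝕜] [Fintype m] [Fintype n]

theorem re_trace_conjTranspose_mul_self (A : Matrix m n 𝕜) :
    RCLike.re (Aᴴ * A).trace = ∑ i, ∑ j, ‖A i j‖ ^ 2 := by
  simp only [trace, diag_apply, mul_apply, conjTranspose_apply, map_sum, RCLike.star_def,
    RCLike.conj_mul]
  rw [Finset.sum_comm]
  norm_cast

theorem re_trace_conjTranspose_sub_mul_sub (X Y : Matrix m n 𝕜) :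
    RCLike.re ((X - Y)ᴴ * (X - Y)).trace =
      RCLike.re (Xᴴ * X).trace - 2 * RCLike.re (X * Yᴴ).trace + RCLike.re (Yᴴ * Y).trace := by
  have hXY : (Xᴴ * Y).trace = star (X * Yᴴ).trace := by
    rw [← trace_conjTranspose, conjTranspose_mul, conjTranspose_conjTranspose, trace_mul_comm]
  simp only [conjTranspose_sub, Matrix.sub_mul, Matrix.mul_sub, trace_sub, map_sub, hXY,
    trace_mul_comm Yᴴ X, RCLike.star_def, RCLike.conj_re]
  ring

theorem sum_norm_sub_sq_eq (X Y : Matrix m n 𝕜) :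
    ∑ i, ∑ j, ‖X i j - Y i j‖ ^ 2 =
      RCLike.re (Xᴴ * X).trace - 2 * RCLike.re (X * Yᴴ).trace + ∑ i, ∑ j, ‖Y i j‖ ^ 2 := by
  simp only [← re_trace_conjTranspose_mul_self, ← sub_apply, re_trace_conjTranspose_sub_mul_sub]

theorem conjTranspose_mul_self_inv_mul_mul_eq [DecidableEq m] {T : Matrix m m 𝕜}
    {F C : Matrix m n 𝕜} {R : Matrix n n 𝕜} (hT : T.IsHermitian) (hdet : IsUnit T.det)
    (hC : Cᴴ * C = R) (hTT : T * T = F * R * Fᴴ) :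
    (T⁻¹ * F * R)ᴴ * (T⁻¹ * F * R) = R := by
  set W := T⁻¹ * F * Cᴴ
  have hWW : W * Wᴴ = 1 := by
    calc W * Wᴴ = T⁻¹ * (T * T) * T⁻¹ := by
          simp only [W, hTT, ← hC, conjTranspose_mul, conjTranspose_nonsing_inv, hT.eq,
            conjTranspose_conjTranspose, Matrix.mul_assoc]
      _ = 1 := by
          rw [← Matrix.mul_assoc, nonsing_inv_mul _ hdet, Matrix.one_mul, mul_nonsing_inv _ hdet]
  calc (T⁻¹ * F * R)ᴴ * (T⁻¹ * F * R) = Cᴴ * (Wᴴ * W) * C := by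
        simp only [W, ← hC, conjTranspose_mul, conjTranspose_conjTranspose, Matrix.mul_assoc]
    _ = R := by rw [mul_eq_one_comm.mp hWW, Matrix.mul_one, hC]

section

variable [DecidableEq n]

theorem PosSemidef.exists_conjTranspose_mul_self_eq_of_rank_eq {R : Matrix n n 𝕜}
    (hR : R.PosSemidef) (hrank : R.rank = Fintype.card m) :
    ∃ C : Matrix m n 𝕜, Cᴴ * C = R := by
  set ev := hR.isHermitian.eigenvalues
  obtain ⟨e⟩ : Nonempty (m ≃ {i // ev i ≠ 0}) := by
    rw [← Fintype.card_eq, ← hR.isHermitian.rank_eq_card_non_zero_eigs, hrank]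
  set D : Matrix n n 𝕜 := diagonal fun i => (√(ev i) : 𝕜)
  set U : Matrix n n 𝕜 := (hR.isHermitian.eigenvectorUnitary : Matrix n n 𝕜)
  have hD : ∀ i ∉ Set.range (fun k => (e k).1), D i = 0 := by
    intro i hi
    have hev : ev i = 0 := by
      by_contra h
      exact hi ⟨e.symm ⟨i, h⟩, by simp⟩
    ext j
    simp [D, diagonal_apply, hev]
  have hDD : Dᴴ * D = diagonal (RCLike.ofReal ∘ ev) := by
    rw [diagonal_conjTranspose, diagonal_mul_diagonal]
    congr 1
    ext i
    simp only [Pi.star_apply, RCLike.star_def, RCLike.conj_ofReal, Function.comp_apply]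
    rw [← RCLike.ofReal_mul, Real.mul_self_sqrt (hR.eigenvalues_nonneg i)]
  refine ⟨D.submatrix (fun k => (e k).1) id * star U, ?_⟩
  conv_rhs => rw [hR.isHermitian.spectral_theorem, Unitary.conjStarAlgAut_apply]
  rw [conjTranspose_mul, Matrix.mul_assoc, ← Matrix.mul_assoc _ _ (star U),
    conjTranspose_submatrix_mul_submatrix_of_eq_zero (fun _ _ h => e.injective (Subtype.ext h)) hD,
    hDD, star_eq_conjTranspose, conjTranspose_conjTranspose, ← Matrix.mul_assoc]

theorem re_trace_mul_le_of_conjTranspose_mul_self_eq_one {T W : Matrix n n 𝕜}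
    (hT : T.PosSemidef) (hW : Wᴴ * W = 1) : RCLike.re (W * T).trace ≤ RCLike.re T.trace := by
  have h := (RCLike.nonneg_iff.mp (hT.mul_mul_conjTranspose_same (1 - W)).trace_nonneg).1
  have hWTW : (W * T * Wᴴ).trace = T.trace := by
    rw [trace_mul_cycle, hW, one_mul]
  have hTW : (T * Wᴴ).trace = star (W * T).trace := by
    rw [← trace_conjTranspose, conjTranspose_mul, hT.isHermitian.eq]
  simp only [conjTranspose_sub, conjTranspose_one, sub_mul, mul_sub, one_mul, mul_one,
    trace_sub, map_sub, hWTW, hTW, RCLike.star_def, RCLike.conj_re] at h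
  linarith

theorem re_trace_le_of_conjTranspose_mul_self_eq_mul_self {M P : Matrix n n 𝕜}
    (hP : P.PosDef) (hM : Mᴴ * M = P * P) : RCLike.re M.trace ≤ RCLike.re P.trace := by
  have hdet : IsUnit P.det := (isUnit_iff_isUnit_det P).mp hP.isUnit
  have hW : (M * P⁻¹)ᴴ * (M * P⁻¹) = 1 := by
    rw [conjTranspose_mul, conjTranspose_nonsing_inv, hP.isHermitian.eq, Matrix.mul_assoc,
      ← Matrix.mul_assoc Mᴴ, hM, Matrix.mul_assoc, mul_nonsing_inv _ hdet, Matrix.mul_one,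
      nonsing_inv_mul _ hdet]
  rw [← nonsing_inv_mul_cancel_right P M hdet]
  exact re_trace_mul_le_of_conjTranspose_mul_self_eq_one hP.posSemidef hW

end

theorem re_trace_mul_conjTranspose_le [DecidableEq m] {Φ F : Matrix m n 𝕜} {R : Matrix n n 𝕜}
    {T : Matrix m m 𝕜} (hT : T.PosDef) (hTT : T * T = F * R * Fᴴ) {β : ℝ} (hβ : 0 < β)
    (hΦ : Φᴴ * Φ = (β : 𝕜) ^ 2 • R) :
    RCLike.re (Φ * Fᴴ).trace ≤ β * RCLike.re T.trace := by
  have hP : ((β : 𝕜) • T).PosDef := hT.smul (RCLike.ofReal_pos.mpr hβ)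
  have hM : (Φ * Fᴴ)ᴴ * (Φ * Fᴴ) = ((β : 𝕜) • T) * ((β : 𝕜) • T) := by
    calc (Φ * Fᴴ)ᴴ * (Φ * Fᴴ) = F * (Φᴴ * Φ) * Fᴴ := by
          simp only [conjTranspose_mul, conjTranspose_conjTranspose, Matrix.mul_assoc]
      _ = ((β : 𝕜) • T) * ((β : 𝕜) • T) := by
          rw [hΦ, Matrix.mul_smul, Matrix.smul_mul, ← hTT, smul_mul_smul_comm, sq]
  have h := re_trace_le_of_conjTranspose_mul_self_eq_mul_self hP hM
  rwa [trace_smul, smul_eq_mul, RCLike.re_ofReal_mul] at h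

end Matrix

theorem stmt_18_general {m n : ℕ} (hm : 0 < m)
    (F : Matrix (Fin m) (Fin n) ℂ)
    (R : Matrix (Fin n) (Fin n) ℂ)
    (hR : R.PosSemidef)
    (hrank : R.rank = m)
    (T₁ : Matrix (Fin m) (Fin m) ℂ)
    (hT₁ : T₁.PosDef)
    (hT₁sq : T₁ * T₁ = F * R * Fᴴ)
    (βhat : ℝ)
    (hβhat : βhat = (T₁.trace).re / (R.trace).re)
    (Φhat : Matrix (Fin m) (Fin n) ℂ)
    (hΦhat : Φhat = (βhat : ℂ) • (T₁⁻¹ * F * R)) :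
    0 < βhat ∧
    Φhatᴴ * Φhat = ((βhat : ℂ) ^ 2) • R ∧
    ∀ (β : ℝ), 0 < β →
      ∀ Φ : Matrix (Fin m) (Fin n) ℂ, Φᴴ * Φ = ((β : ℂ) ^ 2) • R →
        ∑ i, ∑ j, ‖Φhat i j - F i j‖ ^ 2 ≤ ∑ i, ∑ j, ‖Φ i j - F i j‖ ^ 2 := by
  have : Nonempty (Fin m) := ⟨⟨0, hm⟩⟩
  have hdet : IsUnit T₁.det := (isUnit_iff_isUnit_det T₁).mp hT₁.isUnit
  obtain ⟨C, hC⟩ := hR.exists_conjTranspose_mul_self_eq_of_rank_eq (m := Fin m)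
    (by rw [hrank, Fintype.card_fin])
  have hT₁tr : 0 < T₁.trace.re := (Complex.pos_iff.mp hT₁.trace_pos).1
  have hRtr : 0 < R.trace.re := by
    have hR0 : R ≠ 0 := by rintro rfl; simp at hrank; omega
    exact (Complex.pos_iff.mp (hR.trace_nonneg.lt_of_ne' (hR.trace_eq_zero_iff.not.mpr hR0))).1
  have hgram : Φhatᴴ * Φhat = (βhat : ℂ) ^ 2 • R := by
    rw [hΦhat, conjTranspose_smul, Matrix.smul_mul, Matrix.mul_smul, smul_smul,
      conjTranspose_mul_self_inv_mul_mul_eq hT₁.isHermitian hdet hC hT₁sq, Complex.star_def,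
      Complex.conj_ofReal, ← sq]
  refine ⟨hβhat ▸ div_pos hT₁tr hRtr, hgram, fun β hβ Φ hΦ => ?_⟩
  have hcross : (Φhat * Fᴴ).trace.re = βhat * T₁.trace.re := by
    rw [hΦhat, Matrix.smul_mul, Matrix.mul_assoc, Matrix.mul_assoc, ← Matrix.mul_assoc F, ← hT₁sq,
      ← Matrix.mul_assoc, nonsing_inv_mul _ hdet, Matrix.one_mul, trace_smul, smul_eq_mul,
      Complex.re_ofReal_mul]
  have hbound : (Φ * Fᴴ).trace.re ≤ β * T₁.trace.re :=
    re_trace_mul_conjTranspose_le hT₁ hT₁sq hβ hΦ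
  have hβhat_tr : βhat * R.trace.re = T₁.trace.re := by rw [hβhat]; field_simp
  rw [sum_norm_sub_sq_eq, sum_norm_sub_sq_eq, hgram, hΦ]
  -- by `hβhat_tr` and `hbound`, the difference of the two errors is at least `tr R (β - β̂)²`
  simp only [trace_smul, RCLike.re_to_complex, hcross, smul_eq_mul, ← Complex.ofReal_pow,
    Complex.re_ofReal_mul]
  nlinarith [mul_nonneg hRtr.le (sq_nonneg (β - βhat))]

/-- Constrained least-squares matrix with Gram matrix prescribed up to
scale. Let `F` be `m×n`, `R` an `n×n` Hermitian positive semidefinite matrix of rank `m`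
with `F·R·F*` positive definite, `T₁ = (F·R·F*)^{1/2}` the unique Hermitian positive
definite square root, and `β̂ = Tr((F·R·F*)^{1/2})/Tr(R) > 0`. Then
`Φ̂ = β̂·(F·R·F*)^{-1/2}·F·R = β̂·T₁⁻¹·F·R` satisfies `Φ̂*·Φ̂ = β̂²·R` and minimizes
the (squared) Frobenius-norm error `‖Φ − F‖_F²` among all `Φ` with `Φ*·Φ = β²·R` for
some real `β > 0`. -/
theorem stmt_18 {m n : ℕ} (hm : 0 < m)
    (F : Matrix (Fin m) (Fin n) ℂ)
    (R : Matrix (Fin n) (Fin n) ℂ)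
    (hR : R.PosSemidef)
    (hrank : R.rank = m)
    (hPD : (F * R * Fᴴ).PosDef)
    (T₁ : Matrix (Fin m) (Fin m) ℂ)
    (hT₁ : T₁.PosDef)
    (hT₁sq : T₁ * T₁ = F * R * Fᴴ)
    (βhat : ℝ)
    (hβhat : βhat = (T₁.trace).re / (R.trace).re)
    (Φhat : Matrix (Fin m) (Fin n) ℂ)
    (hΦhat : Φhat = (βhat : ℂ) • (T₁⁻¹ * F * R)) :
    0 < βhat ∧
    Φhatᴴ * Φhat = ((βhat : ℂ) ^ 2) • R ∧
    ∀ (β : ℝ), 0 < β →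
      ∀ Φ : Matrix (Fin m) (Fin n) ℂ, Φᴴ * Φ = ((β : ℂ) ^ 2) • R →
        ∑ i, ∑ j, ‖Φhat i j - F i j‖ ^ 2 ≤ ∑ i, ∑ j, ‖Φ i j - F i j‖ ^ 2 :=
  stmt_18_general hm F R hR hrank T₁ hT₁ hT₁sq βhat hβhat Φhat hΦhat
end
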